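/- arXiv:1806.11178 — 10 statements merged into one kernel-verified Lean document; each statement's English description precedes it below -/
import Mathlib

section
/- For every N ≥ 2 and every probability mass vector p on Fin N, the prevision under p of p's own total logarithmic score equals the negentropy plus the negextropy of p: ∑ x, p x * S(x,p) = ∑ i, p i * log (p i) + ∑ i, (1 - p i) * log (1 - p i), i.e. E_p[S(·,p)] = -(H(p) + J(p)). -/
open Real Finset

/-- A probability mass vector: all components strictly between 0 and 1, summing to 1. -/
def IsPMV {N : ℕ} (p : Fin N → ℝ) : Prop :=
  (∀ i, 0 < p i ∧ p i < 1) ∧ ∑ i, p i = 1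

/-- The total logarithmic score of the pmv `p` at outcome `x`. -/
noncomputable def S {N : ℕ} (x : Fin N) (p : Fin N → ℝ) : ℝ :=
  Real.log (p x) + ∑ i ∈ Finset.univ.erase x, Real.log (1 - p i)

theorem prevision_own_totalLogScore {N : ℕ} (hN : 2 ≤ N)
    (p : Fin N → ℝ) (hp : IsPMV p) :
    ∑ x, p x * S x p =
      ∑ i, p i * Real.log (p i) + ∑ i, (1 - p i) * Real.log (1 - p i) := by
  have hS : ∀ x : Fin N, S x p =
      Real.log (p x) + ((∑ i, Real.log (1 - p i)) - Real.log (1 - p x)) := by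
    intro x
    rw [S, Finset.sum_erase_eq_sub (Finset.mem_univ x)]
  calc ∑ x, p x * S x p
      = ∑ x, (p x * Real.log (p x) + (p x * (∑ i, Real.log (1 - p i))
          - p x * Real.log (1 - p x))) := by
        refine Finset.sum_congr rfl fun x _ => ?_
        rw [hS x]; ring
    _ = ∑ x, p x * Real.log (p x) + ((∑ x, p x) * (∑ i, Real.log (1 - p i))
          - ∑ x, p x * Real.log (1 - p x)) := by
        rw [Finset.sum_add_distrib, Finset.sum_sub_distrib, Finset.sum_mul]
    _ = ∑ i, p i * Real.log (p i) + ∑ i, (1 - p i) * Real.log (1 - p i) := by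
        rw [hp.2, one_mul, ← Finset.sum_sub_distrib]
        congr 1
        refine Finset.sum_congr rfl fun i _ => ?_
        ring
end

section
/- The total logarithmic scoring rule is strictly proper: for every N ≥ 2 and all probability mass vectors p ≠ q on Fin N, the prevision under p of p's own total logarithmic score strictly exceeds the prevision under p of q's total logarithmic score: ∑ x, p x * S(x,p) > ∑ x, p x * S(x,q). -/
open Real Finset

/-!
Since `∑ x, p x = 1`, the prevision under `p` of the total logarithmic score of `q` splits into a
sum over the coordinates `i` of the expected logarithmic score of the forecast `q i` for a binary
event of probability `p i`. Each of these binary scores is strictly proper by Gibbs' inequality,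
i.e. by `log t < t - 1` for `t ≠ 1`, and `p ≠ q` makes at least one coordinate strict.
-/

theorem mul_log_lt_mul_log_add_sub {a b : ℝ} (ha : 0 < a) (hb : 0 < b) (hab : a ≠ b) :
    a * log b < a * log a + (b - a) := by
  have hlt : log (b / a) < b / a - 1 :=
    log_lt_sub_one_of_pos (div_pos hb ha) (by rwa [ne_eq, div_eq_one_iff_eq ha.ne', eq_comm])
  rw [log_div hb.ne' ha.ne'] at hlt
  have hscaled := mul_lt_mul_of_pos_left hlt ha
  rw [mul_sub, mul_sub, mul_div_cancel₀ b ha.ne', mul_one] at hscaled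
  linarith

noncomputable def binaryLogScore (a b : ℝ) : ℝ :=
  a * log b + (1 - a) * log (1 - b)

theorem binaryLogScore_lt_self {a b : ℝ} (ha : a ∈ Set.Ioo 0 1) (hb : b ∈ Set.Ioo 0 1)
    (hab : a ≠ b) : binaryLogScore a b < binaryLogScore a a := by
  have hone := mul_log_lt_mul_log_add_sub ha.1 hb.1 hab
  have hzero := mul_log_lt_mul_log_add_sub (sub_pos.2 ha.2) (sub_pos.2 hb.2)
    (sub_right_injective.ne hab)
  unfold binaryLogScore
  linarith

theorem binaryLogScore_le_self {a b : ℝ} (ha : a ∈ Set.Ioo 0 1) (hb : b ∈ Set.Ioo 0 1) :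
    binaryLogScore a b ≤ binaryLogScore a a := by
  rcases eq_or_ne a b with rfl | hab
  · exact le_rfl
  · exact (binaryLogScore_lt_self ha hb hab).le

theorem sum_mul_S_eq_sum_binaryLogScore {N : ℕ} {p : Fin N → ℝ} (hp : ∑ i, p i = 1)
    (q : Fin N → ℝ) : ∑ x, p x * S x q = ∑ x, binaryLogScore (p x) (q x) := by
  set T := ∑ i, log (1 - q i)
  have hterm : ∀ x, p x * S x q
      = binaryLogScore (p x) (q x) + (p x * T - log (1 - q x)) := by
    intro x
    rw [S, sum_erase_eq_sub (mem_univ x), binaryLogScore]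
    ring
  rw [sum_congr rfl fun x _ => hterm x, sum_add_distrib, sum_sub_distrib, ← sum_mul, hp,
    one_mul, sub_self, add_zero]

theorem totalLogScore_strictly_proper_general {N : ℕ}
    (p q : Fin N → ℝ) (hp : IsPMV p) (hq : IsPMV q) (hpq : p ≠ q) :
    ∑ x, p x * S x p > ∑ x, p x * S x q := by
  obtain ⟨i, hi⟩ := Function.ne_iff.mp hpq
  rw [sum_mul_S_eq_sum_binaryLogScore hp.2, sum_mul_S_eq_sum_binaryLogScore hp.2]
  exact sum_lt_sum (fun j _ => binaryLogScore_le_self (hp.1 j) (hq.1 j))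
    ⟨i, mem_univ i, binaryLogScore_lt_self (hp.1 i) (hq.1 i) hi⟩

theorem totalLogScore_strictly_proper {N : ℕ} (hN : 2 ≤ N)
    (p q : Fin N → ℝ) (hp : IsPMV p) (hq : IsPMV q) (hpq : p ≠ q) :
    ∑ x, p x * S x p > ∑ x, p x * S x q :=
  totalLogScore_strictly_proper_general p q hp hq hpq
end

section
/- The prevision by one forecaster of the other's net gain may take either sign: there exist probability mass vectors p, q on Fin 2 with ∑ i, (p i - q i) * log (q i / (1 - q i)) > 0, and there exist probability mass vectors p', q' on Fin 2 with ∑ i, (p' i - q' i) * log (q' i / (1 - q' i)) < 0. -/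
open Real Finset

theorem net_gain_prevision_either_sign :
    (∃ p q : Fin 2 → ℝ, IsPMV p ∧ IsPMV q ∧
      ∑ i, (p i - q i) * Real.log (q i / (1 - q i)) > 0) ∧
    (∃ p' q' : Fin 2 → ℝ, IsPMV p' ∧ IsPMV q' ∧
      ∑ i, (p' i - q' i) * Real.log (q' i / (1 - q' i)) < 0) := by
  have hA : IsPMV (![3/4, 1/4] : Fin 2 → ℝ) := by
    refine ⟨fun i => by fin_cases i <;> norm_num, by simp [Fin.sum_univ_two]; norm_num⟩
  have hB : IsPMV (![1/4, 3/4] : Fin 2 → ℝ) := by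
    refine ⟨fun i => by fin_cases i <;> norm_num, by simp [Fin.sum_univ_two]; norm_num⟩
  have hC : IsPMV (![3/5, 2/5] : Fin 2 → ℝ) := by
    refine ⟨fun i => by fin_cases i <;> norm_num, by simp [Fin.sum_univ_two]; norm_num⟩
  have hlog3 : Real.log 3 > 0 := Real.log_pos (by norm_num)
  have h13 : Real.log (1/3 : ℝ) = -Real.log 3 := by
    rw [show (1/3 : ℝ) = 3⁻¹ by norm_num, Real.log_inv]
  have hlog32 : Real.log (3/2 : ℝ) > 0 := Real.log_pos (by norm_num)
  have h23 : Real.log (2/3 : ℝ) = -Real.log (3/2 : ℝ) := by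
    rw [show (2/3 : ℝ) = (3/2 : ℝ)⁻¹ by norm_num, Real.log_inv]
  constructor
  · refine ⟨![3/4, 1/4], ![3/5, 2/5], hA, hC, ?_⟩
    rw [Fin.sum_univ_two]
    norm_num [Matrix.cons_val_zero, Matrix.cons_val_one]
    linarith [h23, hlog32]
  · refine ⟨![3/4, 1/4], ![1/4, 3/4], hA, hB, ?_⟩
    rw [Fin.sum_univ_two]
    norm_num [Matrix.cons_val_zero, Matrix.cons_val_one]
    linarith [h13, hlog3]
end

section
/- For every N ≥ 2 and all probability mass vectors p, q on Fin N, the sum of the two cross-expected net gains equals minus the sum of the two expected comparative gains: ∑ i, (p i - q i) * log (q i / (1 - q i)) + ∑ i, (q i - p i) * log (p i / (1 - p i)) = -( D(p‖q) + Dᶜ(p‖q) + D(q‖p) + Dᶜ(q‖p) ). -/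
open Real Finset

/-- The Kullback–Leibler directed divergence. -/
noncomputable def D {N : ℕ} (p q : Fin N → ℝ) : ℝ :=
  ∑ i, p i * Real.log (p i / q i)

/-- The complementary dual of the Kullback–Leibler directed divergence. -/
noncomputable def Dc {N : ℕ} (p q : Fin N → ℝ) : ℝ :=
  ∑ i, (1 - p i) * Real.log ((1 - p i) / (1 - q i))

theorem sum_cross_net_gains_eq_neg_sum_comparative_gains {N : ℕ} (hN : 2 ≤ N)
    (p q : Fin N → ℝ) (hp : IsPMV p) (hq : IsPMV q) :
    ∑ i, (p i - q i) * Real.log (q i / (1 - q i)) +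
      ∑ i, (q i - p i) * Real.log (p i / (1 - p i)) =
      -(D p q + Dc p q + D q p + Dc q p) := by
  unfold D Dc
  rw [← Finset.sum_add_distrib, ← Finset.sum_add_distrib, ← Finset.sum_add_distrib,
    ← Finset.sum_add_distrib, ← Finset.sum_neg_distrib]
  refine Finset.sum_congr rfl fun i _ => ?_
  obtain ⟨hp0, hp1⟩ := hp.1 i
  obtain ⟨hq0, hq1⟩ := hq.1 i
  rw [Real.log_div hq0.ne' (by linarith), Real.log_div hp0.ne' (by linarith),
    Real.log_div hp0.ne' hq0.ne', Real.log_div (by linarith : (1:ℝ) - p i ≠ 0) (by linarith),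
    Real.log_div hq0.ne' hp0.ne', Real.log_div (by linarith : (1:ℝ) - q i ≠ 0) (by linarith)]
  ring
end

section
/- For every N ≥ 2 and all probability mass vectors p, q on Fin N, p's expected comparative gain over q under the total logarithmic score equals the Kullback–Leibler directed divergence plus its complementary dual: ∑ x, p x * (S(x,p) - S(x,q)) = D(p‖q) + Dᶜ(p‖q). -/
open Real Finset

theorem expected_comparative_gain_eq_divergences {N : ℕ} (hN : 2 ≤ N)
    (p q : Fin N → ℝ) (hp : IsPMV p) (hq : IsPMV q) :
    ∑ x, p x * (S x p - S x q) = D p q + Dc p q := by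
  obtain ⟨hp1, hp2⟩ := hp
  obtain ⟨hq1, hq2⟩ := hq
  set f : Fin N → ℝ := fun i => Real.log (1 - p i) - Real.log (1 - q i) with hf
  have hS : ∀ x, S x p - S x q =
      (Real.log (p x) - Real.log (q x)) + ∑ i ∈ univ.erase x, f i := by
    intro x
    simp only [S, hf, Finset.sum_sub_distrib]
    ring
  have herase : ∀ x : Fin N, ∑ i ∈ univ.erase x, f i = (∑ i, f i) - f x :=
    fun x => Finset.sum_erase_eq_sub (Finset.mem_univ x)
  calc ∑ x, p x * (S x p - S x q)
      = ∑ x, (p x * (Real.log (p x) - Real.log (q x))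
          + (p x * (∑ i, f i) - p x * f x)) := by
        refine Finset.sum_congr rfl fun x _ => ?_
        rw [hS x, herase x]; ring
    _ = (∑ x, p x * (Real.log (p x) - Real.log (q x)))
          + ((∑ x, p x * (∑ i, f i)) - ∑ x, p x * f x) := by
        rw [Finset.sum_add_distrib, Finset.sum_sub_distrib]
    _ = D p q + Dc p q := by
        congr 1
        · refine Finset.sum_congr rfl fun i _ => ?_
          rw [Real.log_div (ne_of_gt (hp1 i).1) (ne_of_gt (hq1 i).1)]
        · rw [← Finset.sum_mul, hp2, one_mul]
          rw [← Finset.sum_sub_distrib]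
          refine Finset.sum_congr rfl fun i _ => ?_
          rw [Real.log_div (sub_pos.mpr (hp1 i).2).ne'
            (sub_pos.mpr (hq1 i).2).ne']
          simp only [hf]; ring
end

section
/- For every N ≥ 2 and all probability mass vectors p, q on Fin N, the sum of the two forecasters' expected comparative gains under the total logarithmic score equals the Kullback total symmetric divergence: ∑ x, p x * (S(x,p) - S(x,q)) + ∑ x, q x * (S(x,q) - S(x,p)) = D(p‖q) + Dᶜ(p‖q) + D(q‖p) + Dᶜ(q‖p). -/
open Real Finset

lemma expected_gain_eq_div_add_dual {N : ℕ} (p q : Fin N → ℝ) (hp : IsPMV p) (hq : IsPMV q) :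
    ∑ x, p x * (S x p - S x q) = D p q + Dc p q := by
  have hps := hp.2
  have h1 : ∀ x, S x p - S x q =
      (Real.log (p x) - Real.log (q x)) +
      ∑ i ∈ Finset.univ.erase x, (Real.log (1 - p i) - Real.log (1 - q i)) := by
    intro x
    simp only [S, Finset.sum_sub_distrib]
    ring
  calc ∑ x, p x * (S x p - S x q)
      = ∑ x, p x * (Real.log (p x) - Real.log (q x)) +
        ∑ x, ∑ i ∈ Finset.univ.erase x, p x * (Real.log (1 - p i) - Real.log (1 - q i)) := by
        rw [← Finset.sum_add_distrib]
        refine Finset.sum_congr rfl fun x _ => ?_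
        rw [h1, mul_add, Finset.mul_sum]
    _ = D p q + Dc p q := by
        congr 1
        · refine Finset.sum_congr rfl fun x _ => ?_
          rw [Real.log_div (ne_of_gt (hp.1 x).1) (ne_of_gt (hq.1 x).1)]
        · rw [Finset.sum_comm' (t := fun x => Finset.univ.erase x)
            (s' := fun i => Finset.univ.erase i) (t' := Finset.univ)
            (by intro x y; simp [Finset.mem_erase, eq_comm, and_comm])]
          refine Finset.sum_congr rfl fun i _ => ?_
          rw [← Finset.sum_mul]
          rw [Finset.sum_erase_eq_sub (Finset.mem_univ i), hps]
          rw [Real.log_div (by linarith [(hp.1 i).2]) (by linarith [(hq.1 i).2])]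

theorem sum_expected_comparative_gains_eq_total_symmetric_divergence {N : ℕ} (hN : 2 ≤ N)
    (p q : Fin N → ℝ) (hp : IsPMV p) (hq : IsPMV q) :
    ∑ x, p x * (S x p - S x q) + ∑ x, q x * (S x q - S x p) =
      D p q + Dc p q + D q p + Dc q p := by
  rw [expected_gain_eq_div_add_dual p q hp hq, expected_gain_eq_div_add_dual q p hq hp]; ring
end

section
/- For every N ≥ 2 and all probability mass vectors p, q on Fin N, the sum of the two cross-expected net gains under the total logarithmic score equals minus the Kullback total symmetric divergence: (∑ x, p x * S(x,q) - ∑ x, q x * S(x,q)) + (∑ x, q x * S(x,p) - ∑ x, p x * S(x,p)) = -( D(p‖q) + D(q‖p) + Dᶜ(p‖q) + Dᶜ(q‖p) ). -/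
open Real Finset

theorem sum_cross_expected_net_gains_eq_neg_total_symmetric_divergence {N : ℕ} (hN : 2 ≤ N)
    (p q : Fin N → ℝ) (hp : IsPMV p) (hq : IsPMV q) :
    (∑ x, p x * S x q - ∑ x, q x * S x q) +
      (∑ x, q x * S x p - ∑ x, p x * S x p) =
      -(D p q + D q p + Dc p q + Dc q p) := by
  obtain ⟨hp1, hp2⟩ := hp
  obtain ⟨hq1, hq2⟩ := hq
  have hS : ∀ (r : Fin N → ℝ) (x : Fin N), S x r =
      Real.log (r x) - Real.log (1 - r x) + ∑ i, Real.log (1 - r i) := by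
    intro r x
    rw [S, Finset.sum_erase_eq_sub (Finset.mem_univ x)]
    ring
  have key : ∀ (a b : Fin N → ℝ), ∑ i, a i = 1 →
      ∑ x, a x * S x b =
        ∑ x, a x * (Real.log (b x) - Real.log (1 - b x)) + ∑ i, Real.log (1 - b i) := by
    intro a b has
    calc ∑ x, a x * S x b
        = ∑ x, (a x * (Real.log (b x) - Real.log (1 - b x))
            + a x * ∑ i, Real.log (1 - b i)) := by
          refine Finset.sum_congr rfl fun x _ => ?_
          rw [hS]; ring
      _ = _ := by rw [Finset.sum_add_distrib, ← Finset.sum_mul, has, one_mul]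
  rw [key p q hp2, key q q hq2, key q p hq2, key p p hp2, D, D, Dc, Dc]
  have hDpq : ∀ i ∈ Finset.univ, p i * Real.log (p i / q i)
      = p i * (Real.log (p i) - Real.log (q i)) := fun i _ => by
    rw [Real.log_div (ne_of_gt (hp1 i).1) (ne_of_gt (hq1 i).1)]
  have hDqp : ∀ i ∈ Finset.univ, q i * Real.log (q i / p i)
      = q i * (Real.log (q i) - Real.log (p i)) := fun i _ => by
    rw [Real.log_div (ne_of_gt (hq1 i).1) (ne_of_gt (hp1 i).1)]
  have hcp : ∀ i, (1 : ℝ) - p i ≠ 0 := fun i => ne_of_gt (by linarith [(hp1 i).2])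
  have hcq : ∀ i, (1 : ℝ) - q i ≠ 0 := fun i => ne_of_gt (by linarith [(hq1 i).2])
  have hCpq : ∀ i ∈ Finset.univ, (1 - p i) * Real.log ((1 - p i) / (1 - q i))
      = (1 - p i) * (Real.log (1 - p i) - Real.log (1 - q i)) := fun i _ => by
    rw [Real.log_div (hcp i) (hcq i)]
  have hCqp : ∀ i ∈ Finset.univ, (1 - q i) * Real.log ((1 - q i) / (1 - p i))
      = (1 - q i) * (Real.log (1 - q i) - Real.log (1 - p i)) := fun i _ => by
    rw [Real.log_div (hcq i) (hcp i)]
  rw [Finset.sum_congr rfl hDpq, Finset.sum_congr rfl hDqp,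
    Finset.sum_congr rfl hCpq, Finset.sum_congr rfl hCqp]
  have hcancel : ∀ a b c : ℝ, a + c - (b + c) = a - b := by intros; ring
  rw [hcancel, hcancel, ← Finset.sum_sub_distrib, ← Finset.sum_sub_distrib,
    ← Finset.sum_add_distrib, ← Finset.sum_add_distrib, ← Finset.sum_add_distrib,
    ← Finset.sum_add_distrib, ← Finset.sum_neg_distrib]
  refine Finset.sum_congr rfl fun i _ => ?_
  ring
end

section
/- The function Δ(p‖q) = (p - q) * log p on (0,1)² is not a (separable, one-dimensional) Bregman divergence: there do not exist functions φ, φ' : ℝ → ℝ such that φ has derivative φ'(x) at every x ∈ (0,1) and (p - q) * log p = φ p - φ q - (p - q) * φ' q for all p, q ∈ (0,1). -/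
/-!
Fix q. The identity says that near q, φ p = φ q + (p - q) * (log p + φ' q); differentiating at
p = q gives φ' q = log q + φ' q, so log q = 0, which fails for q ∈ (0,1).
-/

open Real Filter Topology

theorem hasDerivAt_sub_mul_of_continuousAt {f : ℝ → ℝ} {q : ℝ} (hf : ContinuousAt f q) :
    HasDerivAt (fun p => (p - q) * f p) (f q) q := by
  rw [hasDerivAt_iff_tendsto_slope]
  refine (hf.tendsto.mono_left nhdsWithin_le_nhds).congr' ?_
  filter_upwards [self_mem_nhdsWithin] with p hp
  rw [slope_def_field, sub_self, zero_mul, sub_zero,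
    mul_div_cancel_left₀ _ (sub_ne_zero.mpr hp)]

theorem eq_zero_of_eventually_sub_mul_eq_bregman {φ f : ℝ → ℝ} {φ' q : ℝ}
    (hφ : HasDerivAt φ φ' q) (hf : ContinuousAt f q)
    (h : ∀ᶠ p in 𝓝 q, (p - q) * f p = φ p - φ q - (p - q) * φ') : f q = 0 := by
  have hlin : HasDerivAt (fun p => (p - q) * φ') φ' q := by
    simpa using ((hasDerivAt_id q).sub_const q).mul_const φ'
  have hφ' : HasDerivAt φ (f q + φ') q := by
    refine (((hasDerivAt_sub_mul_of_continuousAt hf).add hlin).add_const (φ q))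
      |>.congr_of_eventuallyEq ?_
    filter_upwards [h] with p hp
    rw [Pi.add_apply]
    linarith
  linarith [hφ.unique hφ']

theorem delta_not_bregman :
    ¬ ∃ φ φ' : ℝ → ℝ,
      (∀ x ∈ Set.Ioo (0 : ℝ) 1, HasDerivAt φ (φ' x) x) ∧
      (∀ p ∈ Set.Ioo (0 : ℝ) 1, ∀ q ∈ Set.Ioo (0 : ℝ) 1,
        (p - q) * Real.log p = φ p - φ q - (p - q) * φ' q) := by
  rintro ⟨φ, φ', hderiv, hbregman⟩
  have hq : (2⁻¹ : ℝ) ∈ Set.Ioo 0 1 := by norm_num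
  have hlog : log 2⁻¹ = 0 :=
    eq_zero_of_eventually_sub_mul_eq_bregman (hderiv _ hq)
      (continuousAt_log (by norm_num))
      (eventually_of_mem (isOpen_Ioo.mem_nhds hq) fun p hp => hbregman p hp _ hq)
  exact (log_neg (by norm_num) (by norm_num)).ne hlog
end

section
/- The cross entropy summand CH(p‖q) = p * log q on (0,1)² is not a (separable, one-dimensional) Bregman divergence: there do not exist functions γ, γ' : ℝ → ℝ such that γ has derivative γ'(x) at every x ∈ (0,1) and p * log q = γ p - γ q - (p - q) * γ' q for all p, q ∈ (0,1). -/
open Real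

theorem cross_entropy_not_bregman :
    ¬ ∃ γ γ' : ℝ → ℝ,
      (∀ x ∈ Set.Ioo (0 : ℝ) 1, HasDerivAt γ (γ' x) x) ∧
      (∀ p ∈ Set.Ioo (0 : ℝ) 1, ∀ q ∈ Set.Ioo (0 : ℝ) 1,
        p * Real.log q = γ p - γ q - (p - q) * γ' q) := by
  rintro ⟨γ, γ', -, h⟩
  have hmem : (1/2 : ℝ) ∈ Set.Ioo (0 : ℝ) 1 := by norm_num
  have := h (1/2) hmem (1/2) hmem
  nlinarith [this, Real.log_neg (by norm_num : (0:ℝ) < 1/2) (by norm_num : (1/2:ℝ) < 1)]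
end

section
/- The complementary Kullback–Leibler directed divergence (relative extropy) is strictly positive for distinct forecasts: for every N ≥ 2 and all probability mass vectors p ≠ q on Fin N, Dᶜ(p‖q) = ∑ i, (1 - p i) * log ((1 - p i)/(1 - q i)) > 0. -/
open Real Finset

lemma key_le (a b : ℝ) (ha : 0 < a) (hb : 0 < b) : a - b ≤ a * Real.log (a / b) := by
  have h := Real.log_le_sub_one_of_pos (show 0 < b / a by positivity)
  have hlog : Real.log (a / b) = - Real.log (b / a) := by
    rw [← Real.log_inv]; congr 1; field_simp
  have h2 : a * Real.log (b / a) ≤ a * (b / a - 1) := by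
    exact mul_le_mul_of_nonneg_left h ha.le
  have h3 : a * (b / a - 1) = b - a := by field_simp
  rw [hlog]; nlinarith

lemma key_lt (a b : ℝ) (ha : 0 < a) (hb : 0 < b) (hab : a ≠ b) :
    a - b < a * Real.log (a / b) := by
  have hne : b / a ≠ 1 := by
    intro h; apply hab; field_simp at h; linarith
  have h := Real.log_lt_sub_one_of_pos (show 0 < b / a by positivity) hne
  have hlog : Real.log (a / b) = - Real.log (b / a) := by
    rw [← Real.log_inv]; congr 1; field_simp
  have h2 : a * Real.log (b / a) < a * (b / a - 1) := by
    exact mul_lt_mul_of_pos_left h ha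
  have h3 : a * (b / a - 1) = b - a := by field_simp
  rw [hlog]; nlinarith

theorem complementary_divergence_pos {N : ℕ} (hN : 2 ≤ N)
    (p q : Fin N → ℝ) (hp : IsPMV p) (hq : IsPMV q) (hpq : p ≠ q) :
    ∑ i, (1 - p i) * Real.log ((1 - p i) / (1 - q i)) > 0 := by
  obtain ⟨hp1, hp2⟩ := hp
  obtain ⟨hq1, hq2⟩ := hq
  have hsum : ∑ i, ((1 - p i) - (1 - q i)) = 0 := by
    simp [Finset.sum_sub_distrib, hp2, hq2]
  have hlt : ∑ i, ((1 - p i) - (1 - q i)) <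
      ∑ i, (1 - p i) * Real.log ((1 - p i) / (1 - q i)) := by
    obtain ⟨j, hj⟩ := Function.ne_iff.mp hpq
    apply Finset.sum_lt_sum
    · intro i _
      exact key_le _ _ (by linarith [(hp1 i).2]) (by linarith [(hq1 i).2])
    · exact ⟨j, Finset.mem_univ j, key_lt _ _ (by linarith [(hp1 j).2])
        (by linarith [(hq1 j).2]) (by intro h; apply hj; linarith)⟩
  linarith
end
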